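/- arXiv:1903.10602 — 2 statements merged into one kernel-verified Lean document; each statement's English description precedes it below -/
import Mathlib

section
/- For every even integer l ≥ 4 and every n expressible as a sum of two squares, the number of l-tuples (μ¹,…,μˡ) of lattice points on the circle of radius √n summing to zero is O(N_n^{l-2}), where N_n is the number of such lattice points. -/
/-!
Fix the first `l - 2` vectors of a tuple in `R_l(n)`; this prescribes the sum `v` of the last two.
If `v ≠ 0`, the last two are `a` and `v - a` with `a` on both circles `|x|² = n` and `|v - x|² = n`,
which meet in at most two points. If `v = 0` there are at most `N_n` choices, but then the first
`l - 2` vectors already sum to zero, and only `N_n ^ (l - 3)` prefixes do. Hence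
`|R_l(n)| ≤ 2 N_n ^ (l - 2) + N_n · N_n ^ (l - 3) = 3 N_n ^ (l - 2)`.
-/

/-- The set of lattice points on the circle of radius `√n`. -/
def latticePoints (n : ℕ) : Set (ℤ × ℤ) := {μ | μ.1 ^ 2 + μ.2 ^ 2 = (n : ℤ)}

/-- The length-`l` spectral correlation set `R_l(n)`. -/
def corrSet (l n : ℕ) : Set (Fin l → ℤ × ℤ) :=
  {f | (∀ j, f j ∈ latticePoints n) ∧ ∑ j, f j = 0}

open Finset

section AddCommGroup

variable {G : Type*} [AddCommGroup G] [DecidableEq G]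

def zeroSumTuples (L : Finset G) (k : ℕ) : Finset (Fin k → G) :=
  {f ∈ Fintype.piFinset fun _ => L | ∑ j, f j = 0}

def sumPairs (L : Finset G) (v : G) : Finset (G × G) :=
  {p ∈ L ×ˢ L | p.1 + p.2 = v}

lemma mem_sumPairs {L : Finset G} {v : G} {p : G × G} :
    p ∈ sumPairs L v ↔ p.1 ∈ L ∧ p.2 ∈ L ∧ p.1 + p.2 = v := by
  simp [sumPairs, and_assoc]

lemma card_sumPairs_le (L : Finset G) (v : G) : #(sumPairs L v) ≤ #L := by
  refine card_le_card_of_injOn Prod.fst (fun p hp => (mem_sumPairs.1 hp).1) ?_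
  intro p hp q hq hpq
  have hp := (mem_sumPairs.1 hp).2.2
  have hq := (mem_sumPairs.1 hq).2.2
  exact Prod.ext hpq (add_left_cancel (a := p.1) (by rw [hp, hpq, hq]))

lemma card_zeroSumTuples_succ_le (L : Finset G) (k : ℕ) :
    #(zeroSumTuples L (k + 1)) ≤ #L ^ k := by
  have hsub : zeroSumTuples L (k + 1) ⊆
      (Fintype.piFinset fun _ : Fin k => L).image fun g => Fin.snoc g (-∑ i, g i) := by
    intro f hf
    simp only [zeroSumTuples, mem_filter, Fintype.mem_piFinset, Fin.sum_univ_castSucc] at hf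
    refine mem_image.2 ⟨Fin.init f, Fintype.mem_piFinset.2 fun i => hf.1 _, ?_⟩
    show Fin.snoc (Fin.init f) (-∑ i : Fin k, f i.castSucc) = f
    rw [← eq_neg_of_add_eq_zero_right hf.2]
    exact Fin.snoc_init_self f
  calc #(zeroSumTuples L (k + 1)) ≤ #(Fintype.piFinset fun _ : Fin k => L) :=
        (card_le_card hsub).trans card_image_le
    _ = #L ^ k := by simp

lemma card_zeroSumTuples_add_two_le (L : Finset G) (k : ℕ) :
    #(zeroSumTuples L (k + 2)) ≤
      ∑ g ∈ Fintype.piFinset (fun _ : Fin k => L), #(sumPairs L (-∑ i, g i)) := by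
  have hsub : zeroSumTuples L (k + 2) ⊆
      ((Fintype.piFinset fun _ : Fin k => L).sigma fun g => sumPairs L (-∑ i, g i)).image
        fun x => Fin.snoc (Fin.snoc x.1 x.2.1) x.2.2 := by
    intro f hf
    simp only [zeroSumTuples, mem_filter, Fintype.mem_piFinset, Fin.sum_univ_castSucc] at hf
    refine mem_image.2 ⟨⟨Fin.init (Fin.init f), Fin.init f (Fin.last k), f (Fin.last (k + 1))⟩,
      mem_sigma.2 ⟨Fintype.mem_piFinset.2 fun i => hf.1 _, mem_sumPairs.2
        ⟨hf.1 _, hf.1 _, eq_neg_of_add_eq_zero_right ((add_assoc _ _ _).symm.trans hf.2)⟩⟩, ?_⟩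
    simp only [Fin.snoc_init_self]
  exact (card_le_card hsub).trans (card_image_le.trans (card_sigma _ _).le)

lemma card_zeroSumTuples_add_three_le (L : Finset G) (k r : ℕ)
    (hr : ∀ v ≠ 0, #(sumPairs L v) ≤ r) :
    #(zeroSumTuples L (k + 3)) ≤ (r + 1) * #L ^ (k + 1) := by
  set P := Fintype.piFinset fun _ : Fin (k + 1) => L
  have hzero : ∑ g ∈ P with ∑ i, g i = 0, #(sumPairs L (-∑ i, g i)) ≤ #L ^ (k + 1) :=
    calc _ ≤ #{g ∈ P | ∑ i, g i = 0} • #L :=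
          sum_le_card_nsmul _ _ _ fun _ _ => card_sumPairs_le L _
      _ ≤ #L ^ k * #L := Nat.mul_le_mul_right _ (card_zeroSumTuples_succ_le L k)
      _ = #L ^ (k + 1) := (pow_succ _ _).symm
  have hne : ∑ g ∈ P with ¬∑ i, g i = 0, #(sumPairs L (-∑ i, g i)) ≤ r * #L ^ (k + 1) :=
    calc _ ≤ #{g ∈ P | ¬∑ i, g i = 0} • r :=
          sum_le_card_nsmul _ _ _ fun g hg => hr _ (neg_ne_zero.2 (mem_filter.1 hg).2)
      _ ≤ #P * r := Nat.mul_le_mul_right _ (card_filter_le _ _)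
      _ = r * #L ^ (k + 1) := by simp [P, mul_comm]
  calc #(zeroSumTuples L (k + 3)) ≤ ∑ g ∈ P, #(sumPairs L (-∑ i, g i)) :=
        card_zeroSumTuples_add_two_le L (k + 1)
    _ = _ := (sum_filter_add_sum_filter_not _ _ _).symm
    _ ≤ #L ^ (k + 1) + r * #L ^ (k + 1) := add_le_add hzero hne
    _ = (r + 1) * #L ^ (k + 1) := by ring

end AddCommGroup

lemma card_le_two_of_sq_eq {R : Type*} [CommRing R] [NoZeroDivisors R] {s : Finset R}
    (hs : ∀ x ∈ s, ∀ y ∈ s, x ^ 2 = y ^ 2) : #s ≤ 2 := by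
  by_contra! h
  obtain ⟨x, hx, y, hy, z, hz, hxy, hxz, hyz⟩ := two_lt_card.1 h
  have hyx := (sq_eq_sq_iff_eq_or_eq_neg.1 (hs x hx y hy)).resolve_left hxy
  have hzx := (sq_eq_sq_iff_eq_or_eq_neg.1 (hs x hx z hz)).resolve_left hxz
  exact hyz (neg_injective (hyx.symm.trans hzx))

section Circle

variable {R : Type*} [CommRing R] [LinearOrder R] [IsStrictOrderedRing R]

lemma two_mul_inner_eq_of_add_eq {n : R} {a b v : R × R} (ha : a.1 ^ 2 + a.2 ^ 2 = n)
    (hb : b.1 ^ 2 + b.2 ^ 2 = n) (hv : a + b = v) :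
    2 * (a.1 * v.1 + a.2 * v.2) = v.1 ^ 2 + v.2 ^ 2 := by
  subst hv
  simp only [Prod.fst_add, Prod.snd_add]
  linear_combination ha - hb

-- Lagrange's identity `⟨a, v⟩² + (a × v)² = |a|² |v|²` with `2 ⟨a, v⟩ = |v|²`.
lemma four_mul_cross_sq_eq_of_add_eq {n : R} {a b v : R × R} (ha : a.1 ^ 2 + a.2 ^ 2 = n)
    (hb : b.1 ^ 2 + b.2 ^ 2 = n) (hv : a + b = v) :
    4 * (a.1 * v.2 - a.2 * v.1) ^ 2 = 4 * n * (v.1 ^ 2 + v.2 ^ 2) - (v.1 ^ 2 + v.2 ^ 2) ^ 2 := by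
  have hmid := two_mul_inner_eq_of_add_eq ha hb hv
  linear_combination
    4 * (v.1 ^ 2 + v.2 ^ 2) * ha - (2 * (a.1 * v.1 + a.2 * v.2) + v.1 ^ 2 + v.2 ^ 2) * hmid

lemma eq_of_inner_eq_of_cross_eq {a b v : R × R} (hv : v ≠ 0)
    (hinner : a.1 * v.1 + a.2 * v.2 = b.1 * v.1 + b.2 * v.2)
    (hcross : a.1 * v.2 - a.2 * v.1 = b.1 * v.2 - b.2 * v.1) : a = b := by
  have hv2 : v.1 ^ 2 + v.2 ^ 2 ≠ 0 := by
    rw [sq, sq, Ne, mul_self_add_mul_self_eq_zero]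
    exact fun h => hv (Prod.ext h.1 h.2)
  refine Prod.ext (mul_left_cancel₀ hv2 ?_) (mul_left_cancel₀ hv2 ?_)
  · linear_combination v.1 * hinner + v.2 * hcross
  · linear_combination v.2 * hinner - v.1 * hcross

-- On the line `2 ⟨a, v⟩ = |v|²` the cross product `a × v` is an injective coordinate, and on the
-- circle `|a|² = n` its square is fixed, so it takes at most two values.
lemma card_sumPairs_le_two {n : R} {L : Finset (R × R)} (hL : ∀ a ∈ L, a.1 ^ 2 + a.2 ^ 2 = n)
    {v : R × R} (hv : v ≠ 0) : #(sumPairs L v) ≤ 2 := by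
  set cross : (R × R) × (R × R) → R := fun p => p.1.1 * v.2 - p.1.2 * v.1
  have hinj : Set.InjOn cross (sumPairs L v) := by
    intro p hp q hq hpq
    obtain ⟨hp1, hp2, hpv⟩ := mem_sumPairs.1 hp
    obtain ⟨hq1, hq2, hqv⟩ := mem_sumPairs.1 hq
    have hfst : p.1 = q.1 := eq_of_inner_eq_of_cross_eq hv (mul_left_cancel₀ two_ne_zero
      ((two_mul_inner_eq_of_add_eq (hL _ hp1) (hL _ hp2) hpv).trans
        (two_mul_inner_eq_of_add_eq (hL _ hq1) (hL _ hq2) hqv).symm)) hpq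
    exact Prod.ext hfst (add_left_cancel (a := p.1) (by rw [hpv, hfst, hqv]))
  rw [← card_image_of_injOn hinj]
  refine card_le_two_of_sq_eq ?_
  simp only [mem_image]
  rintro _ ⟨p, hp, rfl⟩ _ ⟨q, hq, rfl⟩
  obtain ⟨hp1, hp2, hpv⟩ := mem_sumPairs.1 hp
  obtain ⟨hq1, hq2, hqv⟩ := mem_sumPairs.1 hq
  refine mul_left_cancel₀ (four_ne_zero (α := R)) ?_
  rw [four_mul_cross_sq_eq_of_add_eq (hL _ hp1) (hL _ hp2) hpv,
    four_mul_cross_sq_eq_of_add_eq (hL _ hq1) (hL _ hq2) hqv]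

end Circle

lemma latticePoints_finite (n : ℕ) : (latticePoints n).Finite := by
  refine ((Set.finite_Icc (-(n : ℤ)) n).prod (Set.finite_Icc (-(n : ℤ)) n)).subset ?_
  rintro ⟨x, y⟩ (h : x ^ 2 + y ^ 2 = n)
  have hx : |x| ≤ n := by
    rw [Int.abs_eq_natAbs]; linarith [Int.natAbs_le_self_sq x, sq_nonneg y]
  have hy : |y| ≤ n := by
    rw [Int.abs_eq_natAbs]; linarith [Int.natAbs_le_self_sq y, sq_nonneg x]
  exact ⟨abs_le.1 hx, abs_le.1 hy⟩

theorem corrSet_card_le_general (l : ℕ) (hl4 : 4 ≤ l) :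
    ∃ C : ℝ, 0 < C ∧ ∀ n : ℕ, 1 ≤ Nat.card (latticePoints n) →
      (Nat.card (corrSet l n) : ℝ) ≤ C * (Nat.card (latticePoints n) : ℝ) ^ (l - 2) := by
  refine ⟨3, by norm_num, fun n _ => ?_⟩
  obtain ⟨k, rfl⟩ : ∃ k, l = k + 3 := ⟨l - 3, by omega⟩
  have hfin := latticePoints_finite n
  set L := hfin.toFinset
  have hL : ∀ a ∈ L, a.1 ^ 2 + a.2 ^ 2 = (n : ℤ) := fun a ha => hfin.mem_toFinset.1 ha
  have hcorr : corrSet (k + 3) n = zeroSumTuples L (k + 3) := by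
    ext f
    simp [corrSet, zeroSumTuples, L]
  have hbound := card_zeroSumTuples_add_three_le L k 2 fun v hv => card_sumPairs_le_two hL hv
  rw [hcorr, Nat.card_coe_set_eq, Set.ncard_coe_finset, Nat.card_eq_card_finite_toFinset hfin]
  exact_mod_cast hbound

/-- For every even `l ≥ 4` there is a constant `C` such that for every `n` (with at least one
lattice point on the circle of radius `√n`), `|R_l(n)| ≤ C · N_n^(l-2)`. -/
theorem corrSet_card_le (l : ℕ) (hl : Even l) (hl4 : 4 ≤ l) :
    ∃ C : ℝ, 0 < C ∧ ∀ n : ℕ, 1 ≤ Nat.card (latticePoints n) →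
      (Nat.card (corrSet l n) : ℝ) ≤ C * (Nat.card (latticePoints n) : ℝ) ^ (l - 2) :=
  corrSet_card_le_general l hl4
end

section
/- The greatest common divisor of the first coordinates of all lattice points on the circle of radius √n equals Q_n = 2^{⌊a/2⌋} ∏ q_k^{h_k}, where n = 2^a ∏ p_j^{e_j} ∏ q_k^{2h_k} with p_j ≡ 1 and q_k ≡ 3 mod 4. -/
/-!
Write `n = Q² m` with `Q = 2^⌊a/2⌋ ∏ q_k^{h_k}` and `m = 2^(a mod 2) ∏ p_j^{e_j}`.
A prime `ℓ` that is `2` or `≡ 3 (mod 4)` can divide `x² + y²` to order at least two only by dividing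
both `x` and `y`; removing the prime factors of `Q` one at a time shows that `Q` divides every
coordinate. Conversely `m` is not divisible by `4` and has no prime factor `≡ 3 (mod 4)`, so it is a
sum `x² + y²` of coprime squares (Brahmagupta's identity for coprime factors; for `p^k` one of the
two products `(x + iy)(c ± id)` stays primitive). The points `(Qx, Qy)` and `(Qy, Qx)` then force
the gcd to divide `Q · gcd(x, y) = Q`.
-/

/-- The finite set of lattice points on the circle of radius `√n`. -/
noncomputable def latticeSet (n : ℕ) : Finset (ℤ × ℤ) :=
  (Finset.Icc ((-(n : ℤ), -(n : ℤ)) : ℤ × ℤ) (((n : ℤ), (n : ℤ)) : ℤ × ℤ)).filter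
    (fun μ => μ.1 ^ 2 + μ.2 ^ 2 = (n : ℤ))

theorem mem_latticeSet {n : ℕ} {μ : ℤ × ℤ} : μ ∈ latticeSet n ↔ μ.1 ^ 2 + μ.2 ^ 2 = n := by
  refine ⟨fun h => (Finset.mem_filter.mp h).2, fun h => Finset.mem_filter.mpr ⟨?_, h⟩⟩
  have := Int.le_self_sq μ.1
  have := Int.le_self_sq (-μ.1)
  have := Int.le_self_sq μ.2
  have := Int.le_self_sq (-μ.2)
  simp only [Finset.mem_Icc]
  refine ⟨⟨?_, ?_⟩, ?_, ?_⟩ <;> nlinarith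

noncomputable def firstCoordGcd (n : ℕ) : ℕ :=
  ((latticeSet n).filter (fun μ => μ.1 ≠ 0)).gcd (fun μ => μ.1.natAbs)

theorem dvd_firstCoordGcd_iff {d n : ℕ} :
    d ∣ firstCoordGcd n ↔ ∀ x y : ℤ, x ^ 2 + y ^ 2 = n → (d : ℤ) ∣ x := by
  simp only [firstCoordGcd, Finset.dvd_gcd_iff, Finset.mem_filter, mem_latticeSet, Int.natCast_dvd,
    and_imp, Prod.forall]
  exact forall₂_congr fun x y => ⟨fun h hxy => if hx : x = 0 then by simp [hx] else h hxy hx,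
    fun h hxy _ => h hxy⟩

theorem firstCoordGcd_sq_mul_dvd {Q m : ℕ} {x y : ℤ} (hc : IsCoprime x y)
    (hxy : x ^ 2 + y ^ 2 = m) : firstCoordGcd (Q ^ 2 * m) ∣ Q := by
  have hG := dvd_firstCoordGcd_iff.mp (dvd_refl (firstCoordGcd (Q ^ 2 * m)))
  have hx := hG (Q * x) (Q * y) (by push_cast; rw [← hxy]; ring)
  have hy := hG (Q * y) (Q * x) (by push_cast; rw [← hxy]; ring)
  obtain ⟨u, v, huv⟩ := hc
  have hQ : (Q : ℤ) = u * (Q * x) + v * (Q * y) := by linear_combination (Q : ℤ) * huv.symm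
  exact Int.natCast_dvd_natCast.mp (hQ ▸ hx.linear_comb hy u v)

theorem two_dvd_of_four_dvd_sq_add_sq {x y : ℤ} (h : (2 : ℤ) ^ 2 ∣ x ^ 2 + y ^ 2) : 2 ∣ x := by
  have h4 := Int.emod_eq_zero_of_dvd h
  rw [pow_two, pow_two, pow_two, Int.add_emod, Int.mul_emod, Int.mul_emod y] at h4
  have := Int.emod_nonneg x (by norm_num : (2:ℤ) * 2 ≠ 0)
  have := Int.emod_lt_of_pos x (by norm_num : (0:ℤ) < 2 * 2)
  have := Int.emod_nonneg y (by norm_num : (2:ℤ) * 2 ≠ 0)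
  have := Int.emod_lt_of_pos y (by norm_num : (0:ℤ) < 2 * 2)
  interval_cases hx : x % (2 * 2) <;> interval_cases y % (2 * 2) <;> omega

theorem dvd_of_dvd_sq_add_sq_of_mod_four_eq_three {ℓ : ℕ} [Fact ℓ.Prime] (h3 : ℓ % 4 = 3)
    {x y : ℤ} (h : (ℓ : ℤ) ∣ x ^ 2 + y ^ 2) : (ℓ : ℤ) ∣ x := by
  rw [← ZMod.intCast_zmod_eq_zero_iff_dvd] at h ⊢
  push_cast at h
  by_contra hx
  exact ZMod.mod_four_ne_three_of_sq_eq_neg_sq hx (eq_neg_of_add_eq_zero_left h) h3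

theorem Nat.Prime.dvd_of_sq_dvd_sq_add_sq {ℓ : ℕ} (hℓ : ℓ.Prime) (h23 : ℓ = 2 ∨ ℓ % 4 = 3)
    {x y : ℤ} (h : (ℓ : ℤ) ^ 2 ∣ x ^ 2 + y ^ 2) : (ℓ : ℤ) ∣ x := by
  rcases h23 with rfl | h3
  · exact two_dvd_of_four_dvd_sq_add_sq h
  · have := Fact.mk hℓ
    exact dvd_of_dvd_sq_add_sq_of_mod_four_eq_three h3 ((dvd_pow_self _ two_ne_zero).trans h)

theorem dvd_of_sq_dvd_sq_add_sq {d : ℕ} (hd : ∀ ℓ, ℓ.Prime → ℓ ∣ d → ℓ = 2 ∨ ℓ % 4 = 3)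
    {x y : ℤ} (h : (d : ℤ) ^ 2 ∣ x ^ 2 + y ^ 2) : (d : ℤ) ∣ x := by
  induction d using induction_on_primes generalizing x y with
  | zero =>
    have : x ^ 2 + y ^ 2 = 0 := by simpa using h
    simp only [Nat.cast_zero, zero_dvd_iff]
    nlinarith [sq_nonneg x, sq_nonneg y]
  | one => exact one_dvd x
  | prime_mul ℓ d hℓ ih =>
    have hℓ23 := hd ℓ hℓ (dvd_mul_right ℓ d)
    have hℓ2 : (ℓ : ℤ) ^ 2 ∣ x ^ 2 + y ^ 2 := (pow_dvd_pow_of_dvd (by simp) 2).trans h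
    obtain ⟨x', rfl⟩ := hℓ.dvd_of_sq_dvd_sq_add_sq hℓ23 hℓ2
    obtain ⟨y', rfl⟩ := hℓ.dvd_of_sq_dvd_sq_add_sq hℓ23 (by rwa [add_comm] at hℓ2)
    have hℓ0 : (ℓ : ℤ) ^ 2 ≠ 0 := pow_ne_zero 2 (by exact_mod_cast hℓ.ne_zero)
    have h' : (d : ℤ) ^ 2 ∣ x' ^ 2 + y' ^ 2 := by
      have hd2 : ((ℓ * d : ℕ) : ℤ) ^ 2 = (ℓ : ℤ) ^ 2 * (d : ℤ) ^ 2 := by push_cast; ring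
      have hxy2 : ((ℓ : ℤ) * x') ^ 2 + ((ℓ : ℤ) * y') ^ 2 = (ℓ : ℤ) ^ 2 * (x' ^ 2 + y' ^ 2) := by
        ring
      rw [hd2, hxy2] at h
      exact (mul_dvd_mul_iff_left hℓ0).mp h
    push_cast
    exact mul_dvd_mul_left _ (ih (fun q hq hqd => hd q hq (dvd_mul_of_dvd_right hqd ℓ)) h')

theorem isCoprime_of_sq_add_sq_eq_prime_pow {p k : ℕ} (hp : p.Prime) {x y : ℤ}
    (hxy : x ^ 2 + y ^ 2 = (p : ℤ) ^ k) (h : ¬ ((p : ℤ) ∣ x ∧ (p : ℤ) ∣ y)) : IsCoprime x y := by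
  have hp' := Nat.prime_iff_prime_int.mp hp
  refine isCoprime_of_prime_dvd (fun ⟨hx, hy⟩ => ?_) fun z hz hzx hzy => h ?_
  · simp [hx, hy, eq_comm, hp.ne_zero] at hxy
  · have hzpk : z ∣ (p : ℤ) ^ k := hxy ▸ dvd_add (hzx.pow two_ne_zero) (hzy.pow two_ne_zero)
    have hzp : Associated z p := hz.associated_of_dvd hp' (hz.dvd_of_dvd_pow hzpk)
    exact ⟨hzp.dvd_iff_dvd_left.mp hzx, hzp.dvd_iff_dvd_left.mp hzy⟩

theorem exists_isCoprime_sq_add_sq_eq_prime {p : ℕ} (hp : p.Prime) (h3 : p % 4 ≠ 3) :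
    ∃ x y : ℤ, IsCoprime x y ∧ x ^ 2 + y ^ 2 = p := by
  have := Fact.mk hp
  obtain ⟨x, y, hxy⟩ := Nat.Prime.sq_add_sq h3
  have hxy' : (x : ℤ) ^ 2 + (y : ℤ) ^ 2 = (p : ℤ) ^ 1 := by rw [pow_one]; exact_mod_cast hxy
  refine ⟨x, y, isCoprime_of_sq_add_sq_eq_prime_pow hp hxy' ?_, by simpa using hxy'⟩
  rintro ⟨hx, hy⟩
  have : (p : ℤ) ^ 2 ∣ (p : ℤ) ^ 1 :=
    hxy' ▸ dvd_add (pow_dvd_pow_of_dvd hx 2) (pow_dvd_pow_of_dvd hy 2)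
  have := (Nat.pow_dvd_pow_iff_le_right hp.one_lt).mp (by exact_mod_cast this)
  omega

theorem exists_isCoprime_sq_add_sq_eq_prime_pow {p : ℕ} (hp : p.Prime) (h1 : p % 4 = 1) (k : ℕ) :
    ∃ x y : ℤ, IsCoprime x y ∧ x ^ 2 + y ^ 2 = (p : ℤ) ^ k := by
  induction k with
  | zero => exact ⟨1, 0, isCoprime_one_left, by simp⟩
  | succ k ih =>
    obtain ⟨x, y, hxy, hk⟩ := ih
    obtain ⟨c, d, hcd, hcdp⟩ := exists_isCoprime_sq_add_sq_eq_prime hp (by omega)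
    by_contra hne
    have hdvd : ∀ X Y : ℤ, X ^ 2 + Y ^ 2 = (p : ℤ) ^ (k + 1) → (p : ℤ) ∣ X ∧ (p : ℤ) ∣ Y :=
      fun X Y hXY => not_not.mp fun h =>
        hne ⟨X, Y, isCoprime_of_sq_add_sq_eq_prime_pow hp hXY h, hXY⟩
    -- Both products `(x + iy)(c ± id)` would then be divisible by `p`, which forces `p ∣ x, y`.
    obtain ⟨hX₁, hY₁⟩ := hdvd (x * c - y * d) (x * d + y * c)
      (by rw [pow_succ (p : ℤ) k, ← hk, ← hcdp]; ring)
    obtain ⟨hX₂, hY₂⟩ := hdvd (x * c + y * d) (y * c - x * d)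
      (by rw [pow_succ (p : ℤ) k, ← hk, ← hcdp]; ring)
    have hp2 : IsCoprime (p : ℤ) 2 := by
      have := Nat.isCoprime_iff_coprime.mpr ((Nat.coprime_primes hp Nat.prime_two).mpr (by omega))
      exact_mod_cast this
    have hxc : (p : ℤ) ∣ x * c :=
      hp2.dvd_of_dvd_mul_right (by convert dvd_add hX₁ hX₂ using 1; ring)
    have hyd : (p : ℤ) ∣ y * d :=
      hp2.dvd_of_dvd_mul_right (by convert dvd_sub hX₂ hX₁ using 1; ring)
    have hxd : (p : ℤ) ∣ x * d :=
      hp2.dvd_of_dvd_mul_right (by convert dvd_sub hY₁ hY₂ using 1; ring)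
    have hyc : (p : ℤ) ∣ y * c :=
      hp2.dvd_of_dvd_mul_right (by convert dvd_add hY₁ hY₂ using 1; ring)
    obtain ⟨u, v, huv⟩ := hcd
    have hx : (p : ℤ) ∣ x := by
      rw [show x = u * (x * c) + v * (x * d) by linear_combination (-x) * huv]
      exact hxc.linear_comb hxd u v
    have hy : (p : ℤ) ∣ y := by
      rw [show y = u * (y * c) + v * (y * d) by linear_combination (-y) * huv]
      exact hyc.linear_comb hyd u v
    exact (Nat.prime_iff_prime_int.mp hp).not_isUnit (hxy.isUnit_of_dvd' hx hy)

-- If `a x + b y = 1`, `a' u + b' v = 1` and `c m + d m' = 1`, the Bézout witness below comes from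
-- `X u + Y v = x m'`, `Y u - X v = y m'`, `X x + Y y = u m` and `Y x - X y = v m`.
theorem exists_isCoprime_sq_add_sq_eq_mul {x y u v m m' : ℤ} (hxy : IsCoprime x y)
    (hm : x ^ 2 + y ^ 2 = m) (huv : IsCoprime u v) (hm' : u ^ 2 + v ^ 2 = m')
    (hmm' : IsCoprime m m') : ∃ X Y : ℤ, IsCoprime X Y ∧ X ^ 2 + Y ^ 2 = m * m' := by
  obtain ⟨a, b, hab⟩ := hxy
  obtain ⟨a', b', hab'⟩ := huv
  obtain ⟨c, d, hcd⟩ := hmm'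
  refine ⟨x * u - y * v, x * v + y * u,
    ⟨c * (a' * x - b' * y) + d * (a * u - b * v), c * (a' * y + b' * x) + d * (a * v + b * u), ?_⟩,
    by rw [← hm, ← hm']; ring⟩
  subst hm hm'
  linear_combination c * (x ^ 2 + y ^ 2) * hab' + d * (u ^ 2 + v ^ 2) * hab + hcd

theorem exists_isCoprime_sq_add_sq_eq {m : ℕ} (h4 : ¬ 4 ∣ m)
    (h3 : ∀ ℓ, ℓ.Prime → ℓ ∣ m → ℓ % 4 ≠ 3) : ∃ x y : ℤ, IsCoprime x y ∧ x ^ 2 + y ^ 2 = m := by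
  induction m using Nat.recOnPosPrimePosCoprime with
  | prime_pow p k hp hk =>
    have hp3 := h3 p hp (dvd_pow_self p hk.ne')
    rcases hp.eq_two_or_odd with rfl | hodd
    · obtain rfl : k = 1 := by
        by_contra hk1
        exact h4 (pow_dvd_pow 2 (show 2 ≤ k by omega))
      simpa using exists_isCoprime_sq_add_sq_eq_prime Nat.prime_two (by norm_num)
    · push_cast
      exact exists_isCoprime_sq_add_sq_eq_prime_pow hp (by omega) k
  | zero => exact absurd (dvd_zero 4) h4
  | one => exact ⟨1, 0, isCoprime_one_left, by simp⟩
  | coprime a b _ _ hab iha ihb =>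
    obtain ⟨x, y, hxy, ha⟩ := iha (fun h => h4 (h.mul_right b))
      (fun ℓ hℓ hd => h3 ℓ hℓ (hd.mul_right b))
    obtain ⟨u, v, huv, hb⟩ := ihb (fun h => h4 (h.mul_left a))
      (fun ℓ hℓ hd => h3 ℓ hℓ (hd.mul_left a))
    push_cast
    exact exists_isCoprime_sq_add_sq_eq_mul hxy ha huv hb (Nat.isCoprime_iff_coprime.mpr hab)

theorem firstCoordGcd_sq_mul_eq {Q m : ℕ} (hQ : ∀ ℓ, ℓ.Prime → ℓ ∣ Q → ℓ = 2 ∨ ℓ % 4 = 3)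
    (h4 : ¬ 4 ∣ m) (h3 : ∀ ℓ, ℓ.Prime → ℓ ∣ m → ℓ % 4 ≠ 3) : firstCoordGcd (Q ^ 2 * m) = Q := by
  obtain ⟨u, v, huv, hm⟩ := exists_isCoprime_sq_add_sq_eq h4 h3
  refine Nat.dvd_antisymm (firstCoordGcd_sq_mul_dvd huv hm) (dvd_firstCoordGcd_iff.mpr ?_)
  intro x y hxy
  exact dvd_of_sq_dvd_sq_add_sq (y := y) hQ ⟨m, by rw [hxy]; push_cast; ring⟩

theorem Nat.Prime.eq_two_or_exists_eq_of_dvd_two_pow_mul_prod {ι : Type*} [Fintype ι]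
    {f : ι → ℕ} (hf : ∀ i, (f i).Prime) {ℓ b : ℕ} {k : ι → ℕ} (hℓ : ℓ.Prime)
    (h : ℓ ∣ 2 ^ b * ∏ i, f i ^ k i) : ℓ = 2 ∨ ∃ i, ℓ = f i := by
  rcases hℓ.dvd_mul.mp h with h2 | hprod
  · exact Or.inl ((Nat.prime_dvd_prime_iff_eq hℓ Nat.prime_two).mp (hℓ.dvd_of_dvd_pow h2))
  · obtain ⟨i, -, hi⟩ := (hℓ.prime.dvd_finsetProd_iff _).mp hprod
    exact Or.inr ⟨i, (Nat.prime_dvd_prime_iff_eq hℓ (hf i)).mp (hℓ.dvd_of_dvd_pow hi)⟩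

theorem gcd_first_coords_eq_Qn_general (n a s r : ℕ) (p e : Fin s → ℕ) (q h : Fin r → ℕ)
    (hp : ∀ j, (p j).Prime) (hp1 : ∀ j, p j % 4 = 1)
    (hq : ∀ k, (q k).Prime) (hq3 : ∀ k, q k % 4 = 3)
    (hn : n = 2 ^ a * (∏ j, p j ^ e j) * ∏ k, q k ^ (2 * h k)) :
    Finset.gcd ((latticeSet n).filter (fun μ => μ.1 ≠ 0)) (fun μ => μ.1.natAbs) =
      2 ^ (a / 2) * ∏ k, q k ^ h k := by
  set Q := 2 ^ (a / 2) * ∏ k, q k ^ h k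
  set m := 2 ^ (a % 2) * ∏ j, p j ^ e j
  have hnQm : n = Q ^ 2 * m := by
    have h2 : 2 ^ a = (2 ^ (a / 2)) ^ 2 * 2 ^ (a % 2) := by
      rw [← pow_mul, ← pow_add, mul_comm, Nat.div_add_mod]
    have hq2 : ∏ k, q k ^ (2 * h k) = (∏ k, q k ^ h k) ^ 2 := by
      rw [← Finset.prod_pow]
      exact Finset.prod_congr rfl fun k _ => by ring
    rw [hn, h2, hq2]
    ring
  have hm4 : ¬ 4 ∣ m := by
    have hodd : Odd (∏ j, p j ^ e j) := Finset.prod_induction _ Odd (fun _ _ => Odd.mul) odd_one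
      fun j _ => (Nat.odd_iff.mpr (by have := hp1 j; omega)).pow
    rw [Nat.odd_iff] at hodd
    rcases Nat.mod_two_eq_zero_or_one a with ha | ha <;> simp only [m, ha] <;> omega
  have hm3 : ∀ ℓ, ℓ.Prime → ℓ ∣ m → ℓ % 4 ≠ 3 := fun ℓ hℓ hd => by
    rcases hℓ.eq_two_or_exists_eq_of_dvd_two_pow_mul_prod hp hd with rfl | ⟨j, rfl⟩ <;> simp [hp1]
  have hQ : ∀ ℓ, ℓ.Prime → ℓ ∣ Q → ℓ = 2 ∨ ℓ % 4 = 3 := fun ℓ hℓ hd =>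
    (hℓ.eq_two_or_exists_eq_of_dvd_two_pow_mul_prod hq hd).imp_right fun ⟨k, hk⟩ => hk ▸ hq3 k
  change firstCoordGcd n = Q
  rw [hnQm]
  exact firstCoordGcd_sq_mul_eq hQ hm4 hm3

/-- For `n = 2^a · ∏ p_j^{e_j} · ∏ q_k^{2 h_k}` a sum of two squares (`p_j ≡ 1`, `q_k ≡ 3`
mod 4 primes), the gcd of the nonzero first coordinates of the lattice points on the circle
of radius `√n` equals `Q_n = 2^⌊a/2⌋ · ∏ q_k^{h_k}`. -/
theorem gcd_first_coords_eq_Qn (n a s r : ℕ) (p e : Fin s → ℕ) (q h : Fin r → ℕ)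
    (hp : ∀ j, (p j).Prime) (hp1 : ∀ j, p j % 4 = 1) (hpinj : Function.Injective p)
    (hq : ∀ k, (q k).Prime) (hq3 : ∀ k, q k % 4 = 3) (hqinj : Function.Injective q)
    (hn : n = 2 ^ a * (∏ j, p j ^ e j) * ∏ k, q k ^ (2 * h k)) :
    Finset.gcd ((latticeSet n).filter (fun μ => μ.1 ≠ 0)) (fun μ => μ.1.natAbs) =
      2 ^ (a / 2) * ∏ k, q k ^ h k :=
  gcd_first_coords_eq_Qn_general n a s r p e q h hp hp1 hq hq3 hn
end
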